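/- Let A > 0, B ∈ ℝ, E > |B| and z̄ > 0. For each positive integer h put L_h(z̄) = { √(4πAℓ(hz̄ − πAℓ))/√(1 − B²/E²) : ℓ ∈ ℤ, 2E/(E+|B|) < hz̄/(πAℓ) } ∪ { hz̄ }. Then sup over positive integers h of (sup L_h(z̄))/h equals z̄/√(1 − B²/E²). Consequently, if z̄₁, z̄₂ > 0 satisfy L_h(z̄₁) = L_h(z̄₂) for all positive integers h, then z̄₁ = z̄₂. -/
import Mathlib


open Real

/-- `L_h(z̄)`: the set of lengths of closed magnetic geodesics of energy `E > |B|` in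
the central free homotopy class of `exp(hz̄Z)`. -/
noncomputable def Lh (A B E zbar : ℝ) (h : ℕ) : Set ℝ :=
  {l | ∃ ℓ : ℤ, 2 * E / (E + |B|) < (h : ℝ) * zbar / (π * A * (ℓ : ℝ)) ∧
    l = Real.sqrt (4 * π * A * (ℓ : ℝ) * ((h : ℝ) * zbar - π * A * (ℓ : ℝ)))
          / Real.sqrt (1 - B ^ 2 / E ^ 2)} ∪ {(h : ℝ) * zbar}

set_option maxHeartbeats 1000000 in
/-- For `A > 0`, `E > |B|` and `z̄ > 0`, the supremum over positive integers `h` of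
`(sup L_h(z̄))/h` equals `z̄/√(1 - B²/E²)`; consequently, if `z̄₁, z̄₂ > 0` give the
same sets `L_h` for all positive integers `h`, then `z̄₁ = z̄₂`. -/
theorem stmt19 (A B E : ℝ) (hA : 0 < A) (hE : |B| < E) :
    (∀ zbar : ℝ, 0 < zbar →
      sSup {x : ℝ | ∃ h : ℕ, 0 < h ∧ x = sSup (Lh A B E zbar h) / (h : ℝ)}
        = zbar / Real.sqrt (1 - B ^ 2 / E ^ 2)) ∧
    (∀ zbar₁ zbar₂ : ℝ, 0 < zbar₁ → 0 < zbar₂ →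
      (∀ h : ℕ, 0 < h → Lh A B E zbar₁ h = Lh A B E zbar₂ h) → zbar₁ = zbar₂) := by
  have hE0 : 0 < E := (abs_nonneg B).trans_lt hE
  have hB2 : B ^ 2 < E ^ 2 := by nlinarith [abs_nonneg B, sq_abs B]
  have h1pos : 0 < 1 - B ^ 2 / E ^ 2 := by
    have h2 : B ^ 2 / E ^ 2 < 1 := (div_lt_one (by positivity)).2 hB2
    linarith
  set c : ℝ := Real.sqrt (1 - B ^ 2 / E ^ 2) with hc
  have hcpos : 0 < c := Real.sqrt_pos.2 h1pos
  have hcle1 : c ≤ 1 := by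
    rw [hc]
    have h0 : 0 ≤ B ^ 2 / E ^ 2 := by positivity
    calc Real.sqrt (1 - B ^ 2 / E ^ 2) ≤ Real.sqrt 1 := Real.sqrt_le_sqrt (by linarith)
      _ = 1 := Real.sqrt_one
  have key : ∀ zbar : ℝ, 0 < zbar →
      sSup {x : ℝ | ∃ h : ℕ, 0 < h ∧ x = sSup (Lh A B E zbar h) / (h : ℝ)}
        = zbar / c := by
    intro zbar hz
    -- upper bound for elements of Lh
    have hub : ∀ h : ℕ, ∀ l ∈ Lh A B E zbar h, l ≤ (h : ℝ) * zbar / c := by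
      intro h l hl
      rcases hl with ⟨ℓ, _, rfl⟩ | hl
      · rw [← hc]
        have hXle : Real.sqrt (4 * π * A * (ℓ : ℝ) * ((h : ℝ) * zbar - π * A * (ℓ : ℝ)))
            ≤ (h : ℝ) * zbar := by
          have h1 : 4 * π * A * (ℓ : ℝ) * ((h : ℝ) * zbar - π * A * (ℓ : ℝ))
              ≤ ((h : ℝ) * zbar) ^ 2 := by
            nlinarith [sq_nonneg ((h : ℝ) * zbar - 2 * (π * A * (ℓ : ℝ)))]
          calc Real.sqrt (4 * π * A * (ℓ : ℝ) * ((h : ℝ) * zbar - π * A * (ℓ : ℝ)))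
              ≤ Real.sqrt (((h : ℝ) * zbar) ^ 2) := Real.sqrt_le_sqrt h1
            _ = (h : ℝ) * zbar := Real.sqrt_sq (by positivity)
        gcongr
      · have hl' : l = (h : ℝ) * zbar := hl
        subst hl'
        rw [le_div_iff₀ hcpos]
        nlinarith [mul_nonneg (Nat.cast_nonneg h : (0:ℝ) ≤ (h:ℕ)) hz.le]
    have hne : ∀ h : ℕ, ((h : ℝ) * zbar) ∈ Lh A B E zbar h := fun h => Or.inr rfl
    have hbdd : ∀ h : ℕ, BddAbove (Lh A B E zbar h) := fun h => ⟨_, hub h⟩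
    have hsup_le : ∀ h : ℕ, sSup (Lh A B E zbar h) ≤ (h : ℝ) * zbar / c :=
      fun h => csSup_le ⟨_, hne h⟩ (hub h)
    -- lower bound: step C
    have stepC : ∀ h : ℕ, 2 * π * A < (h : ℝ) * zbar →
        Real.sqrt (((h : ℝ) * zbar) ^ 2 - (2 * π * A) ^ 2) / c
          ≤ sSup (Lh A B E zbar h) := by
      intro h hh
      have hπA : (0:ℝ) < π * A := by positivity
      set t : ℝ := (h : ℝ) * zbar / (2 * π * A) with ht
      have ht1 : 1 < t := (one_lt_div (by positivity)).2 hh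
      set ℓ : ℤ := ⌈t⌉ - 1 with hℓdef
      have hℓlt : (ℓ : ℝ) < t := by
        have h1 := Int.ceil_lt_add_one t
        rw [hℓdef]; push_cast; linarith
      have hℓge : t - 1 ≤ (ℓ : ℝ) := by
        have h1 := Int.le_ceil t
        rw [hℓdef]; push_cast; linarith
      have hℓpos : (0:ℝ) < (ℓ : ℝ) := by linarith
      have h2x : 2 * (π * A * (ℓ : ℝ)) < (h : ℝ) * zbar := by
        have h1 : (ℓ : ℝ) < (h : ℝ) * zbar / (2 * π * A) := by rw [← ht]; exact hℓlt
        have h2 := (lt_div_iff₀ (by positivity : (0:ℝ) < 2 * π * A)).1 h1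
        linarith
      have h2x' : (h : ℝ) * zbar - 2 * π * A ≤ 2 * (π * A * (ℓ : ℝ)) := by
        have h1 : (h : ℝ) * zbar / (2 * π * A) ≤ (ℓ : ℝ) + 1 := by
          rw [← ht]; linarith
        have h2 := (div_le_iff₀ (by positivity : (0:ℝ) < 2 * π * A)).1 h1
        linarith
      have hxpos : (0:ℝ) < π * A * (ℓ : ℝ) := mul_pos hπA hℓpos
      have hcond : 2 * E / (E + |B|) < (h : ℝ) * zbar / (π * A * (ℓ : ℝ)) := by
        have h2' : 2 * E / (E + |B|) ≤ 2 := by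
          rw [div_le_iff₀ (by positivity : (0:ℝ) < E + |B|)]
          nlinarith [abs_nonneg B]
        have h3 : (2:ℝ) < (h : ℝ) * zbar / (π * A * (ℓ : ℝ)) := by
          rw [lt_div_iff₀ hxpos]; linarith
        linarith
      have hmem : Real.sqrt (4 * π * A * (ℓ : ℝ) * ((h : ℝ) * zbar - π * A * (ℓ : ℝ))) / c
          ∈ Lh A B E zbar h := Or.inl ⟨ℓ, hcond, by rw [hc]⟩
      have habs : ((h : ℝ) * zbar - 2 * (π * A * (ℓ : ℝ))) ^ 2 ≤ (2 * π * A) ^ 2 := by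
        rw [← sq_abs]
        refine pow_le_pow_left₀ (abs_nonneg _) (abs_le.2 ⟨by linarith, by linarith⟩) 2
      have hXle2 : ((h : ℝ) * zbar) ^ 2 - (2 * π * A) ^ 2
          ≤ 4 * π * A * (ℓ : ℝ) * ((h : ℝ) * zbar - π * A * (ℓ : ℝ)) := by
        nlinarith [habs]
      calc Real.sqrt (((h : ℝ) * zbar) ^ 2 - (2 * π * A) ^ 2) / c
          ≤ Real.sqrt (4 * π * A * (ℓ : ℝ) * ((h : ℝ) * zbar - π * A * (ℓ : ℝ))) / c := by gcongr
        _ ≤ sSup (Lh A B E zbar h) := le_csSup (hbdd h) hmem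
    -- the outer set
    have hSub : ∀ x ∈ {x : ℝ | ∃ h : ℕ, 0 < h ∧ x = sSup (Lh A B E zbar h) / (h : ℝ)},
        x ≤ zbar / c := by
      rintro x ⟨h, hh, rfl⟩
      have hh' : (0:ℝ) < (h : ℝ) := by exact_mod_cast hh
      calc sSup (Lh A B E zbar h) / (h : ℝ) ≤ ((h : ℝ) * zbar / c) / (h : ℝ) := by
            gcongr
            exact hsup_le h
        _ = zbar / c := by
            rw [div_div, mul_comm c (h : ℝ), ← div_div, mul_div_cancel_left₀ _ hh'.ne']
    have hSne : Set.Nonempty {x : ℝ | ∃ h : ℕ, 0 < h ∧ x = sSup (Lh A B E zbar h) / (h : ℝ)} :=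
      ⟨_, 1, one_pos, rfl⟩
    refine le_antisymm (csSup_le hSne hSub) ?_
    refine le_of_forall_pos_le_add ?_
    intro ε hε
    set δ : ℝ := min (ε * c) (zbar / 2) with hδdef
    have hδpos : 0 < δ := lt_min (by positivity) (by positivity)
    have hδle : δ ≤ ε * c := min_le_left _ _
    have hδz : δ ≤ zbar / 2 := min_le_right _ _
    have hzd : 0 ≤ zbar - δ := by linarith
    obtain ⟨n, hn⟩ := exists_nat_ge (2 * π * A / Real.sqrt (δ * zbar))
    set h : ℕ := max n 1 with hhdef
    have hh1 : 0 < h := lt_of_lt_of_le one_pos (le_max_right n 1)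
    have hhR : (0:ℝ) < (h : ℝ) := by exact_mod_cast hh1
    have hsq : 0 < Real.sqrt (δ * zbar) := Real.sqrt_pos.2 (by positivity)
    have hnh : 2 * π * A / Real.sqrt (δ * zbar) ≤ (h : ℝ) := by
      refine hn.trans ?_
      exact_mod_cast le_max_left n 1
    have hKle : 2 * π * A ≤ (h : ℝ) * Real.sqrt (δ * zbar) := by
      rw [div_le_iff₀ hsq] at hnh; linarith
    have hsqsq : Real.sqrt (δ * zbar) ^ 2 = δ * zbar :=
      Real.sq_sqrt (by positivity)
    have hK2 : (2 * π * A) ^ 2 ≤ (h : ℝ) ^ 2 * (δ * zbar) := by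
      nlinarith [mul_self_le_mul_self (by positivity : (0:ℝ) ≤ 2 * π * A) hKle, hsqsq]
    have hδz' : δ < zbar := lt_of_le_of_lt hδz (by linarith)
    have hKlt : 2 * π * A < (h : ℝ) * zbar := by
      have hsq2 : (2 * π * A) ^ 2 < ((h : ℝ) * zbar) ^ 2 := by
        nlinarith [mul_pos (mul_pos (mul_pos hhR hhR) hz) (sub_pos.2 hδz')]
      exact lt_of_pow_lt_pow_left₀ 2 (by positivity) hsq2
    have hstep := stepC h hKlt
    have hlow : (h : ℝ) * (zbar - δ) ≤ Real.sqrt (((h : ℝ) * zbar) ^ 2 - (2 * π * A) ^ 2) := by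
      have h1 : ((h : ℝ) * (zbar - δ)) ^ 2 ≤ ((h : ℝ) * zbar) ^ 2 - (2 * π * A) ^ 2 := by
        nlinarith [hK2, mul_nonneg (mul_nonneg (sq_nonneg (h : ℝ)) hδpos.le) hzd]
      calc (h : ℝ) * (zbar - δ) = Real.sqrt (((h : ℝ) * (zbar - δ)) ^ 2) :=
            (Real.sqrt_sq (mul_nonneg hhR.le hzd)).symm
        _ ≤ Real.sqrt (((h : ℝ) * zbar) ^ 2 - (2 * π * A) ^ 2) := Real.sqrt_le_sqrt h1
    have hmemS : sSup (Lh A B E zbar h) / (h : ℝ)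
        ∈ {x : ℝ | ∃ h : ℕ, 0 < h ∧ x = sSup (Lh A B E zbar h) / (h : ℝ)} := ⟨h, hh1, rfl⟩
    have hSle : sSup (Lh A B E zbar h) / (h : ℝ)
        ≤ sSup {x : ℝ | ∃ h : ℕ, 0 < h ∧ x = sSup (Lh A B E zbar h) / (h : ℝ)} :=
      le_csSup ⟨_, hSub⟩ hmemS
    have hA1 : (h : ℝ) * (zbar - δ) / c
        ≤ Real.sqrt (((h : ℝ) * zbar) ^ 2 - (2 * π * A) ^ 2) / c := by
      gcongr
    have hchain : (zbar - δ) / c ≤ sSup (Lh A B E zbar h) / (h : ℝ) := by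
      have h1 : (h : ℝ) * (zbar - δ) / c ≤ sSup (Lh A B E zbar h) := le_trans hA1 hstep
      calc (zbar - δ) / c = ((h : ℝ) * (zbar - δ) / c) / (h : ℝ) := by
            rw [div_div, mul_comm c (h : ℝ), ← div_div, mul_div_cancel_left₀ _ hhR.ne']
        _ ≤ sSup (Lh A B E zbar h) / (h : ℝ) := by gcongr
    have hfin : zbar / c - ε ≤ (zbar - δ) / c := by
      rw [sub_div]
      have hdc : δ / c ≤ ε := (div_le_iff₀ hcpos).2 (by linarith)
      linarith
    linarith [hSle, hchain, hfin]
  refine ⟨fun zbar hz => (key zbar hz).trans (by rw [hc]), ?_⟩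
  intro zbar₁ zbar₂ hz1 hz2 heq
  have h1 := key zbar₁ hz1
  have h2 := key zbar₂ hz2
  have hSS : {x : ℝ | ∃ h : ℕ, 0 < h ∧ x = sSup (Lh A B E zbar₁ h) / (h : ℝ)}
      = {x : ℝ | ∃ h : ℕ, 0 < h ∧ x = sSup (Lh A B E zbar₂ h) / (h : ℝ)} := by
    ext x
    simp only [Set.mem_setOf_eq]
    constructor
    · rintro ⟨h, hh, rfl⟩; exact ⟨h, hh, by rw [heq h hh]⟩
    · rintro ⟨h, hh, rfl⟩; exact ⟨h, hh, by rw [heq h hh]⟩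
  rw [hSS, h2] at h1
  rw [div_eq_div_iff hcpos.ne' hcpos.ne'] at h1
  exact (mul_right_cancel₀ hcpos.ne' h1).symm
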